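/- arXiv:0708.3358 — 3 statements merged into one kernel-verified Lean document; each statement's English description precedes it below -/
import Mathlib

section
/- Let n ≥ 1 and let ‖·‖₁, ‖·‖₂, ‖·‖₃, ‖·‖₄ be norms on ℂⁿ. The generalized induced norms satisfy ‖A‖_{1,2} = ‖A‖_{3,4} for all A ∈ M_n if and only if there exists γ > 0 such that ‖x‖₁ = γ‖x‖₃ and ‖x‖₂ = γ‖x‖₄ for all x ∈ ℂⁿ. -/
open Matrix

/-- `ν` is a norm on `ℂⁿ`. -/
def IsNormCn {n : ℕ} (ν : (Fin n → ℂ) → ℝ) : Prop :=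
  (∀ x, ν x = 0 ↔ x = 0) ∧
  (∀ (c : ℂ) (x), ν (c • x) = ‖c‖ * ν x) ∧
  (∀ x y, ν (x + y) ≤ ν x + ν y)

/-- `N` is a norm on the n×n complex matrices. -/
def IsNormMn {n : ℕ} (N : Matrix (Fin n) (Fin n) ℂ → ℝ) : Prop :=
  (∀ A, N A = 0 ↔ A = 0) ∧
  (∀ (c : ℂ) (A), N (c • A) = ‖c‖ * N A) ∧
  (∀ A B, N (A + B) ≤ N A + N B)

/-- `N` is a minimal norm on `M_n`: any norm dominated by `N` equals `N`. -/
def IsMinimalNorm {n : ℕ} (N : Matrix (Fin n) (Fin n) ℂ → ℝ) : Prop :=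
  ∀ N' : Matrix (Fin n) (Fin n) ℂ → ℝ,
    IsNormMn N' → (∀ A, N' A ≤ N A) → ∀ A, N' A = N A

/-- The generalized induced norm `‖A‖_{1,2} = max{‖Ax‖₂ : ‖x‖₁ = 1}`. -/
noncomputable def gind {n : ℕ} (ν₁ ν₂ : (Fin n → ℂ) → ℝ)
    (A : Matrix (Fin n) (Fin n) ℂ) : ℝ :=
  sSup {r : ℝ | ∃ x : Fin n → ℂ, ν₁ x = 1 ∧ r = ν₂ (A.mulVec x)}

/-- `C_x`: the matrix all of whose columns equal `x`, i.e. `y ↦ (∑ j, y j) • x`. -/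
def Cmat {n : ℕ} (x : Fin n → ℂ) : Matrix (Fin n) (Fin n) ℂ :=
  Matrix.of fun i _ => x i

/-!
On the rank-one matrix of `x ↦ f x • v` the generalized induced norm is `‖f‖₁' * ν₂ v`, where
`‖·‖₁'` is the norm dual to `ν₁`. So equality of the two induced norms on rank-one matrices
separates variables: `ν₂ = γ ν₄` and `‖·‖₃' = γ ‖·‖₁'` for some `γ > 0`, and since Hahn–Banach
recovers each norm from its dual norm, `ν₁ = γ ν₃`. The converse is the substitution `x ↦ γ⁻¹ x`
in the supremum defining `gind`.
-/

namespace IsNormCn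

variable {n : ℕ} {ν : (Fin n → ℂ) → ℝ}

/-- `ℂⁿ` with `ν` as its norm (`Fin n → ℂ` itself carries the sup norm), so that operator norms
and Hahn–Banach are available. -/
def Space (_ : IsNormCn ν) : Type := Fin n → ℂ

theorem map_neg (h : IsNormCn ν) (x : Fin n → ℂ) : ν (-x) = ν x := by
  simpa only [neg_one_smul, norm_neg, norm_one, one_mul] using h.2.1 (-1) x

theorem map_ofReal_smul (h : IsNormCn ν) {c : ℝ} (hc : 0 ≤ c) (x : Fin n → ℂ) :
    ν ((c : ℂ) • x) = c * ν x := by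
  rw [h.2.1, Complex.norm_real, Real.norm_of_nonneg hc]

section Space

variable (h : IsNormCn ν)

noncomputable instance : AddCommGroup h.Space := inferInstanceAs (AddCommGroup (Fin n → ℂ))

noncomputable instance : Module ℂ h.Space := inferInstanceAs (Module ℂ (Fin n → ℂ))

instance : FiniteDimensional ℂ h.Space := inferInstanceAs (FiniteDimensional ℂ (Fin n → ℂ))

instance [NeZero n] : Nontrivial h.Space := inferInstanceAs (Nontrivial (Fin n → ℂ))

noncomputable instance : NormedAddCommGroup h.Space :=
  AddGroupNorm.toNormedAddCommGroup
    { toFun := ν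
      map_zero' := (h.1 0).2 rfl
      add_le' := h.2.2
      neg' := h.map_neg
      eq_zero_of_map_eq_zero' := fun x => (h.1 x).1 }

noncomputable instance : NormedSpace ℂ h.Space := ⟨fun c x => (h.2.1 c x).le⟩

def toSpace : (Fin n → ℂ) ≃ₗ[ℂ] h.Space := LinearEquiv.refl ℂ _

@[simp]
theorem norm_toSpace (x : Fin n → ℂ) : ‖h.toSpace x‖ = ν x := rfl

noncomputable def dualNorm (f : Module.Dual ℂ (Fin n → ℂ)) : ℝ :=
  ‖LinearMap.toContinuousLinearMap (f ∘ₗ h.toSpace.symm.toLinearMap)‖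

theorem norm_apply_le_dualNorm_mul (f : Module.Dual ℂ (Fin n → ℂ)) (x : Fin n → ℂ) :
    ‖f x‖ ≤ h.dualNorm f * ν x := by
  simpa [dualNorm] using
    (LinearMap.toContinuousLinearMap (f ∘ₗ h.toSpace.symm.toLinearMap)).le_opNorm (h.toSpace x)

theorem exists_dualNorm_eq_one [NeZero n] (x : Fin n → ℂ) :
    ∃ f : Module.Dual ℂ (Fin n → ℂ), h.dualNorm f = 1 ∧ ‖f x‖ = ν x := by
  obtain ⟨g, hg, hgx⟩ := exists_dual_vector' ℂ (h.toSpace x)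
  refine ⟨g.toLinearMap ∘ₗ h.toSpace.toLinearMap, hg, ?_⟩
  simpa [hgx] using norm_nonneg (h.toSpace x)

end Space

theorem pos_of_ne_zero (h : IsNormCn ν) {x : Fin n → ℂ} (hx : x ≠ 0) : 0 < ν x := by
  simpa using norm_pos_iff.2 (h.toSpace.map_ne_zero_iff.2 hx)

end IsNormCn

section

variable {n : ℕ} {ν₁ ν₂ ν₃ ν₄ : (Fin n → ℂ) → ℝ}

theorem gind_eq_norm (h₁ : IsNormCn ν₁) (h₂ : IsNormCn ν₂) (A : Matrix (Fin n) (Fin n) ℂ)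
    (T : h₁.Space →L[ℂ] h₂.Space) (hT : ∀ x, T (h₁.toSpace x) = h₂.toSpace (A *ᵥ x)) :
    gind ν₁ ν₂ A = ‖T‖ := by
  rw [← T.sSup_sphere_eq_norm, gind]
  congr 1
  ext r
  constructor
  · rintro ⟨x, hx, rfl⟩
    exact ⟨h₁.toSpace x, by simpa using hx, by simp [hT]⟩
  · rintro ⟨y, hy, rfl⟩
    obtain ⟨x, rfl⟩ := h₁.toSpace.surjective y
    exact ⟨x, by simpa using hy, by simp [hT]⟩

theorem gind_toMatrix'_smulRight (h₁ : IsNormCn ν₁) (h₂ : IsNormCn ν₂)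
    (f : Module.Dual ℂ (Fin n → ℂ)) (v : Fin n → ℂ) :
    gind ν₁ ν₂ (LinearMap.toMatrix' (f.smulRight v)) = h₁.dualNorm f * ν₂ v := by
  rw [gind_eq_norm h₁ h₂ _
    ((LinearMap.toContinuousLinearMap (f ∘ₗ h₁.toSpace.symm.toLinearMap)).smulRight
      (h₂.toSpace v)) fun x => by simp [LinearMap.toMatrix'_mulVec]]
  exact ContinuousLinearMap.norm_smulRight_apply _ _

theorem gind_const_mul (h₃ : IsNormCn ν₃) (h₄ : IsNormCn ν₄) {γ : ℝ} (hγ : 0 < γ)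
    (A : Matrix (Fin n) (Fin n) ℂ) :
    gind (fun x => γ * ν₃ x) (fun x => γ * ν₄ x) A = gind ν₃ ν₄ A := by
  unfold gind
  congr 1
  ext r
  constructor
  · rintro ⟨x, hx, rfl⟩
    exact ⟨(γ : ℂ) • x, by rwa [h₃.map_ofReal_smul hγ.le],
      by rw [mulVec_smul, h₄.map_ofReal_smul hγ.le]⟩
  · rintro ⟨y, hy, rfl⟩
    have hγy : ∀ {ν : (Fin n → ℂ) → ℝ}, IsNormCn ν → ∀ y, γ * ν (((γ⁻¹ : ℝ) : ℂ) • y) = ν y :=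
      fun h y => by rw [h.map_ofReal_smul (inv_nonneg.2 hγ.le), mul_inv_cancel_left₀ hγ.ne']
    exact ⟨((γ⁻¹ : ℝ) : ℂ) • y, (hγy h₃ y).trans hy, by rw [mulVec_smul]; exact (hγy h₄ _).symm⟩

theorem le_mul_of_dualNorm_le [NeZero n] (h₁ : IsNormCn ν₁) (h₂ : IsNormCn ν₂) {c : ℝ}
    (hc : ∀ f, h₂.dualNorm f ≤ c * h₁.dualNorm f) (x : Fin n → ℂ) : ν₁ x ≤ c * ν₂ x := by
  obtain ⟨f, hf, hfx⟩ := h₁.exists_dualNorm_eq_one x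
  calc ν₁ x = ‖f x‖ := hfx.symm
    _ ≤ h₂.dualNorm f * ν₂ x := h₂.norm_apply_le_dualNorm_mul f x
    _ ≤ c * ν₂ x := by
      simpa only [hf, mul_one, h₂.norm_toSpace] using
        mul_le_mul_of_nonneg_right (hc f) (norm_nonneg (h₂.toSpace x))

theorem eq_mul_of_dualNorm_eq_mul [NeZero n] (h₁ : IsNormCn ν₁) (h₂ : IsNormCn ν₂) {γ : ℝ}
    (hγ : 0 < γ) (hdual : ∀ f, h₂.dualNorm f = γ * h₁.dualNorm f) (x : Fin n → ℂ) :
    ν₁ x = γ * ν₂ x := by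
  have hle := le_mul_of_dualNorm_le h₁ h₂ (fun f => (hdual f).le) x
  have hge := le_mul_of_dualNorm_le h₂ h₁ (c := γ⁻¹)
    (fun f => by rw [hdual, inv_mul_cancel_left₀ hγ.ne']) x
  rw [le_inv_mul_iff₀ hγ] at hge
  exact hle.antisymm hge

theorem exists_pos_of_dualNorm_mul_eq [NeZero n] (h₁ : IsNormCn ν₁) (h₂ : IsNormCn ν₂)
    (h₃ : IsNormCn ν₃) (h₄ : IsNormCn ν₄)
    (H : ∀ f v, h₁.dualNorm f * ν₂ v = h₃.dualNorm f * ν₄ v) :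
    ∃ γ : ℝ, 0 < γ ∧ (∀ f, h₃.dualNorm f = γ * h₁.dualNorm f) ∧ ∀ v, ν₂ v = γ * ν₄ v := by
  obtain ⟨v₀, hv₀⟩ := exists_ne (0 : Fin n → ℂ)
  obtain ⟨f₀, hf₀, -⟩ := h₁.exists_dualNorm_eq_one v₀
  have h₂γ : ∀ v, ν₂ v = h₃.dualNorm f₀ * ν₄ v := fun v => by
    simpa only [hf₀, one_mul] using H f₀ v
  have hν₄ : 0 < ν₄ v₀ := h₄.pos_of_ne_zero hv₀
  have hγ : 0 < h₃.dualNorm f₀ := pos_of_mul_pos_left (h₂γ v₀ ▸ h₂.pos_of_ne_zero hv₀) hν₄.le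
  refine ⟨_, hγ, fun f => ?_, h₂γ⟩
  have := H f v₀
  rw [h₂γ, mul_left_comm, ← mul_assoc] at this
  exact (mul_right_cancel₀ hν₄.ne' this).symm

end

theorem gind_eq_iff (n : ℕ) (hn : 1 ≤ n)
    (ν₁ ν₂ ν₃ ν₄ : (Fin n → ℂ) → ℝ)
    (h₁ : IsNormCn ν₁) (h₂ : IsNormCn ν₂) (h₃ : IsNormCn ν₃) (h₄ : IsNormCn ν₄) :
    (∀ A : Matrix (Fin n) (Fin n) ℂ, gind ν₁ ν₂ A = gind ν₃ ν₄ A) ↔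
      ∃ γ : ℝ, 0 < γ ∧
        (∀ x : Fin n → ℂ, ν₁ x = γ * ν₃ x) ∧ (∀ x : Fin n → ℂ, ν₂ x = γ * ν₄ x) := by
  have : NeZero n := ⟨by omega⟩
  constructor
  · intro H
    have hrankOne : ∀ f v, h₁.dualNorm f * ν₂ v = h₃.dualNorm f * ν₄ v := fun f v => by
      simpa only [gind_toMatrix'_smulRight h₁ h₂, gind_toMatrix'_smulRight h₃ h₄] using
        H (LinearMap.toMatrix' (f.smulRight v))
    obtain ⟨γ, hγ, hdual, h₂γ⟩ := exists_pos_of_dualNorm_mul_eq h₁ h₂ h₃ h₄ hrankOne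
    exact ⟨γ, hγ, eq_mul_of_dualNorm_eq_mul h₁ h₃ hγ hdual, h₂γ⟩
  · rintro ⟨γ, hγ, h₁γ, h₂γ⟩ A
    obtain rfl : ν₁ = fun x => γ * ν₃ x := funext h₁γ
    obtain rfl : ν₂ = fun x => γ * ν₄ x := funext h₂γ
    exact gind_const_mul h₃ h₄ hγ A
end

section
/- Let n ≥ 2. The norm on M_n defined by ‖A‖ = max{‖A‖_C, ‖A‖_R}, where ‖A‖_C is the maximum column sum and ‖A‖_R is the maximum row sum of absolute values of entries, is not a generalized induced norm: there do not exist norms ‖·‖₁ and ‖·‖₂ on ℂⁿ such that ‖A‖ = max{‖Ax‖₂ : ‖x‖₁ = 1} for all A ∈ M_n. -/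
open Matrix Pointwise

lemma isNormCn_nonneg {n : ℕ} {ν : (Fin n → ℂ) → ℝ} (h : IsNormCn ν) (x : Fin n → ℂ) :
    0 ≤ ν x := by
  obtain ⟨h0, hs, ht⟩ := h
  have h1 : ν (-x) = ν x := by
    have := hs (-1) x
    simpa using this
  have h2 := ht x (-x)
  rw [add_neg_cancel, (h0 0).mpr rfl, h1] at h2
  linarith

theorem max_col_row_not_gind (n : ℕ) (hn : 2 ≤ n) :
    ¬ ∃ ν₁ ν₂ : (Fin n → ℂ) → ℝ, IsNormCn ν₁ ∧ IsNormCn ν₂ ∧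
        ∀ A : Matrix (Fin n) (Fin n) ℂ,
          max (⨆ j, ∑ i, ‖A i j‖) (⨆ i, ∑ j, ‖A i j‖) = gind ν₁ ν₂ A := by
  rintro ⟨ν₁, ν₂, hν₁, hν₂, h⟩
  haveI : Nonempty (Fin n) := ⟨⟨0, by omega⟩⟩
  set z₀ : Fin n := ⟨0, by omega⟩ with hz₀
  set e : Fin n → ℂ := fun i => if i = z₀ then 1 else 0 with he
  set o : Fin n → ℂ := fun _ => 1 with ho
  have hn2 : (2:ℝ) ≤ (n:ℝ) := by exact_mod_cast hn
  -- generic sup of an indicator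
  have supite : ∀ c : ℝ, 0 ≤ c → (⨆ i : Fin n, if i = z₀ then c else 0) = c := by
    intro c hc
    apply le_antisymm
    · exact ciSup_le fun i => by split <;> simp [hc]
    · have := le_ciSup (f := fun i : Fin n => if i = z₀ then c else 0)
        (Set.Finite.bddAbove (Set.finite_range _)) z₀
      simpa using this
  -- key computation of gind for matrices of the form z ↦ f z • x
  have key : ∀ (x : Fin n → ℂ) (f : (Fin n → ℂ) → ℂ) (A : Matrix (Fin n) (Fin n) ℂ),
      (∀ z, A.mulVec z = f z • x) →
      gind ν₁ ν₂ A = ν₂ x * sSup {t : ℝ | ∃ z, ν₁ z = 1 ∧ t = ‖f z‖} := by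
    intro x f A hA
    have hset : {r : ℝ | ∃ z, ν₁ z = 1 ∧ r = ν₂ (A.mulVec z)}
        = ν₂ x • {t : ℝ | ∃ z, ν₁ z = 1 ∧ t = ‖f z‖} := by
      ext r
      simp only [Set.mem_smul_set, Set.mem_setOf_eq]
      constructor
      · rintro ⟨z, hz, rfl⟩
        exact ⟨‖f z‖, ⟨z, hz, rfl⟩, by rw [hA z, hν₂.2.1, smul_eq_mul, mul_comm]⟩
      · rintro ⟨t, ⟨z, hz, rfl⟩, rfl⟩
        exact ⟨z, hz, by rw [hA z, hν₂.2.1, smul_eq_mul, mul_comm]⟩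
    rw [gind, hset, Real.sSup_smul_of_nonneg (isNormCn_nonneg hν₂ x), smul_eq_mul]
  -- the four matrices
  set M₁ : Matrix (Fin n) (Fin n) ℂ := Cmat e with hM₁
  set M₂ : Matrix (Fin n) (Fin n) ℂ := Cmat o with hM₂
  set M₃ : Matrix (Fin n) (Fin n) ℂ := Matrix.of (fun i j => if i = z₀ ∧ j = z₀ then 1 else 0) with hM₃
  set M₄ : Matrix (Fin n) (Fin n) ℂ := Matrix.of (fun i j => if j = z₀ then 1 else 0) with hM₄
  -- mulVec computations
  have mv₁ : ∀ z, M₁.mulVec z = (∑ j, z j) • e := by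
    intro z; funext i
    simp [hM₁, Cmat, Matrix.mulVec, dotProduct, Finset.sum_mul, mul_comm]
  have mv₂ : ∀ z, M₂.mulVec z = (∑ j, z j) • o := by
    intro z; funext i
    simp [hM₂, Cmat, ho, Matrix.mulVec, dotProduct]
  have mv₃ : ∀ z, M₃.mulVec z = (z z₀) • e := by
    intro z; funext i
    by_cases hi : i = z₀ <;>
      simp [hM₃, he, Matrix.mulVec, dotProduct, hi, ite_and, Finset.sum_ite_eq']
  have mv₄ : ∀ z, M₄.mulVec z = (z z₀) • o := by
    intro z; funext i
    simp [hM₄, ho, Matrix.mulVec, dotProduct, Finset.sum_ite_eq', ite_mul]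
  -- gind values
  set S : ℝ := sSup {t : ℝ | ∃ z, ν₁ z = 1 ∧ t = ‖∑ j, z j‖} with hS
  set T : ℝ := sSup {t : ℝ | ∃ z, ν₁ z = 1 ∧ t = ‖z z₀‖} with hT
  have g₁ : gind ν₁ ν₂ M₁ = ν₂ e * S := key e (fun z => ∑ j, z j) M₁ mv₁
  have g₂ : gind ν₁ ν₂ M₂ = ν₂ o * S := key o (fun z => ∑ j, z j) M₂ mv₂
  have g₃ : gind ν₁ ν₂ M₃ = ν₂ e * T := key e (fun z => z z₀) M₃ mv₃
  have g₄ : gind ν₁ ν₂ M₄ = ν₂ o * T := key o (fun z => z z₀) M₄ mv₄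
  -- norm values
  have N₁ : max (⨆ j, ∑ i, ‖M₁ i j‖) (⨆ i, ∑ j, ‖M₁ i j‖) = (n:ℝ) := by
    have col : ∀ j : Fin n, ∑ i, ‖M₁ i j‖ = 1 := by
      intro j
      simp [hM₁, Cmat, he, apply_ite norm, Finset.sum_ite_eq']
    have row : ∀ i : Fin n, ∑ j, ‖M₁ i j‖ = if i = z₀ then (n:ℝ) else 0 := by
      intro i
      by_cases hi : i = z₀ <;> simp [hM₁, Cmat, he, hi]
    rw [show (⨆ j, ∑ i, ‖M₁ i j‖) = (1:ℝ) by simp only [col]; exact ciSup_const,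
        show (⨆ i, ∑ j, ‖M₁ i j‖) = (n:ℝ) by
          simp only [row]; exact supite _ (by positivity)]
    exact max_eq_right (by linarith)
  have N₂ : max (⨆ j, ∑ i, ‖M₂ i j‖) (⨆ i, ∑ j, ‖M₂ i j‖) = (n:ℝ) := by
    have cr : ∀ i j : Fin n, ‖M₂ i j‖ = 1 := by intro i j; simp [hM₂, Cmat, ho]
    rw [show (⨆ j, ∑ i, ‖M₂ i j‖) = (n:ℝ) by simp only [cr]; simp,
        show (⨆ i, ∑ j, ‖M₂ i j‖) = (n:ℝ) by simp only [cr]; simp]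
    exact max_self _
  have N₃ : max (⨆ j, ∑ i, ‖M₃ i j‖) (⨆ i, ∑ j, ‖M₃ i j‖) = (1:ℝ) := by
    have col : ∀ j : Fin n, ∑ i, ‖M₃ i j‖ = if j = z₀ then (1:ℝ) else 0 := by
      intro j
      by_cases hj : j = z₀ <;>
        simp [hM₃, hj, apply_ite norm, ite_and, Finset.sum_ite_eq']
    have row : ∀ i : Fin n, ∑ j, ‖M₃ i j‖ = if i = z₀ then (1:ℝ) else 0 := by
      intro i
      by_cases hi : i = z₀ <;>
        simp [hM₃, hi, apply_ite norm, ite_and, Finset.sum_ite_eq']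
    rw [show (⨆ j, ∑ i, ‖M₃ i j‖) = (1:ℝ) by simp only [col]; exact supite _ zero_le_one,
        show (⨆ i, ∑ j, ‖M₃ i j‖) = (1:ℝ) by simp only [row]; exact supite _ zero_le_one]
    exact max_self _
  have N₄ : max (⨆ j, ∑ i, ‖M₄ i j‖) (⨆ i, ∑ j, ‖M₄ i j‖) = (n:ℝ) := by
    have col : ∀ j : Fin n, ∑ i, ‖M₄ i j‖ = if j = z₀ then (n:ℝ) else 0 := by
      intro j
      by_cases hj : j = z₀ <;> simp [hM₄, hj]
    have row : ∀ i : Fin n, ∑ j, ‖M₄ i j‖ = 1 := by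
      intro i; simp [hM₄, apply_ite norm, Finset.sum_ite_eq']
    rw [show (⨆ j, ∑ i, ‖M₄ i j‖) = (n:ℝ) by
          simp only [col]; exact supite _ (by positivity),
        show (⨆ i, ∑ j, ‖M₄ i j‖) = (1:ℝ) by simp only [row]; exact ciSup_const]
    exact max_eq_left (by linarith)
  -- combine
  have e₁ : ν₂ e * S = (n:ℝ) := by rw [← g₁, ← h M₁, N₁]
  have e₂ : ν₂ o * S = (n:ℝ) := by rw [← g₂, ← h M₂, N₂]
  have e₃ : ν₂ e * T = (1:ℝ) := by rw [← g₃, ← h M₃, N₃]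
  have e₄ : ν₂ o * T = (n:ℝ) := by rw [← g₄, ← h M₄, N₄]
  have hSne : S ≠ 0 := by
    intro h0; rw [h0, mul_zero] at e₁; linarith
  have hab : ν₂ e = ν₂ o := mul_right_cancel₀ hSne (by rw [e₁, e₂])
  rw [hab, e₄] at e₃
  linarith
end

section
/- Let n ≥ 1 and let N be an algebra norm on M_n. Then N is an induced norm (i.e., there is a norm ‖·‖₀ on ℂⁿ with N(A) = max{‖Ax‖₀ : ‖x‖₀ = 1} for all A) if and only if N is a minimal element of the set of all algebra norms on M_n, i.e., for every algebra norm ‖·‖ on M_n with ‖A‖ ≤ N(A) for all A one has ‖A‖ = N(A) for all A. -/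
open Matrix

/-!
If `N = gind ν ν` and `N' ≤ N` is an algebra norm, fix `x` and choose by Hahn–Banach a vector `w`
with `|w ⬝ᵥ u| ≤ ν u` and `w ⬝ᵥ A x = ν (A x)`. The rank-one matrix `W = x wᵀ` satisfies
`N W ≤ ν x` and `W A W = ν (A x) • W`, so submultiplicativity of `N'` gives
`ν (A x) ≤ N' A * ν x`, i.e. `N ≤ N'`.

Conversely an algebra norm `N` induces the vector norm `ν x = N (C_x)`, and `A C_x = C_{A x}` gives
`ν (A x) ≤ N A * ν x`. Being an operator norm, `gind ν ν` is an algebra norm below `N`, hence equal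
to `N` when `N` is minimal.
-/

section NormAxioms

variable {V : Type*} [AddCommGroup V] [Module ℂ V]

def AddGroupNorm.ofComplexNorm (f : V → ℝ) (h0 : ∀ x, f x = 0 ↔ x = 0)
    (hsmul : ∀ (c : ℂ) x, f (c • x) = ‖c‖ * f x) (hadd : ∀ x y, f (x + y) ≤ f x + f y) :
    AddGroupNorm V where
  toFun := f
  map_zero' := (h0 0).2 rfl
  add_le' := hadd
  neg' x := by simpa using hsmul (-1) x
  eq_zero_of_map_eq_zero' x := (h0 x).1

end NormAxioms

namespace IsNormCn

variable {n : ℕ} {ν : (Fin n → ℂ) → ℝ}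

def toAddGroupNorm (hν : IsNormCn ν) : AddGroupNorm (Fin n → ℂ) :=
  .ofComplexNorm ν hν.1 hν.2.1 hν.2.2

theorem map_zero (hν : IsNormCn ν) : ν 0 = 0 :=
  _root_.map_zero hν.toAddGroupNorm

theorem nonneg (hν : IsNormCn ν) (x : Fin n → ℂ) : 0 ≤ ν x :=
  apply_nonneg hν.toAddGroupNorm x

end IsNormCn

namespace IsNormMn

variable {n : ℕ} {N : Matrix (Fin n) (Fin n) ℂ → ℝ}

def toAddGroupNorm (hN : IsNormMn N) : AddGroupNorm (Matrix (Fin n) (Fin n) ℂ) :=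
  .ofComplexNorm N hN.1 hN.2.1 hN.2.2

theorem nonneg (hN : IsNormMn N) (A : Matrix (Fin n) (Fin n) ℂ) : 0 ≤ N A :=
  apply_nonneg hN.toAddGroupNorm A

theorem pos (hN : IsNormMn N) {A : Matrix (Fin n) (Fin n) ℂ} (hA : A ≠ 0) : 0 < N A :=
  map_pos_of_ne_zero hN.toAddGroupNorm hA

end IsNormMn

/-- `ℂⁿ` under a type synonym, so that `ν` can be installed as its norm without clashing with
the sup norm of `Fin n → ℂ`. -/
def NormedCn {n : ℕ} (_ν : (Fin n → ℂ) → ℝ) : Type := Fin n → ℂ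

namespace NormedCn

variable {n : ℕ} (ν : (Fin n → ℂ) → ℝ)

instance : AddCommGroup (NormedCn ν) := inferInstanceAs (AddCommGroup (Fin n → ℂ))

noncomputable instance : Module ℂ (NormedCn ν) := inferInstanceAs (Module ℂ (Fin n → ℂ))

instance : FiniteDimensional ℂ (NormedCn ν) :=
  inferInstanceAs (FiniteDimensional ℂ (Fin n → ℂ))

variable [hν : Fact (IsNormCn ν)]

noncomputable instance : NormedAddCommGroup (NormedCn ν) :=
  AddGroupNorm.toNormedAddCommGroup <|
    .ofComplexNorm (V := NormedCn ν) ν hν.out.1 hν.out.2.1 hν.out.2.2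

noncomputable instance : NormedSpace ℂ (NormedCn ν) :=
  ⟨fun c x => (hν.out.2.1 c x).le⟩

noncomputable def toCLM : Matrix (Fin n) (Fin n) ℂ ≃ₐ[ℂ] (NormedCn ν →L[ℂ] NormedCn ν) :=
  Matrix.toLinAlgEquiv'.trans (Module.End.toContinuousLinearMap (NormedCn ν))

end NormedCn

section InducedNorm

variable {n : ℕ} {ν : (Fin n → ℂ) → ℝ} [hν : Fact (IsNormCn ν)]

theorem gind_eq_norm_toCLM (A : Matrix (Fin n) (Fin n) ℂ) :
    gind ν ν A = ‖NormedCn.toCLM ν A‖ := by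
  rw [← ContinuousLinearMap.sSup_sphere_eq_norm, gind]
  congr 1
  ext r
  simp only [Set.mem_ofPred_eq, Set.mem_image, mem_sphere_zero_iff_norm, eq_comm (a := r)]
  rfl

theorem gind_le_of_mulVec_le {A : Matrix (Fin n) (Fin n) ℂ} {c : ℝ} (hc : 0 ≤ c)
    (h : ∀ x, ν (A *ᵥ x) ≤ c * ν x) : gind ν ν A ≤ c := by
  rw [gind_eq_norm_toCLM]
  exact (NormedCn.toCLM ν A).opNorm_le_bound hc h

theorem isNormMn_gind : IsNormMn (gind ν ν) := by
  simp only [IsNormMn, gind_eq_norm_toCLM, map_smul, map_add, norm_smul, norm_eq_zero,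
    EmbeddingLike.map_eq_zero_iff, implies_true, true_and]
  exact fun A B => norm_add_le _ _

theorem gind_mul_le (A B : Matrix (Fin n) (Fin n) ℂ) :
    gind ν ν (A * B) ≤ gind ν ν A * gind ν ν B := by
  simp only [gind_eq_norm_toCLM, map_mul]
  exact norm_mul_le _ _

theorem exists_dual_dotProduct (z : Fin n → ℂ) :
    ∃ w : Fin n → ℂ, (∀ u, ‖w ⬝ᵥ u‖ ≤ ν u) ∧ w ⬝ᵥ z = ν z := by
  by_cases hz : z = 0
  · refine ⟨0, fun u => ?_, ?_⟩
    · simpa using hν.out.nonneg u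
    · simp [hz, hν.out.map_zero]
  obtain ⟨g, hg, hgz⟩ := exists_dual_vector (E := NormedCn ν) ℂ z (norm_ne_zero_iff.2 hz)
  have hw : ∀ u, (dotProductEquiv ℂ (Fin n)).symm g.toLinearMap ⬝ᵥ u = g u := fun u =>
    LinearMap.congr_fun ((dotProductEquiv ℂ (Fin n)).apply_symm_apply g.toLinearMap) u
  change g z = ((ν z : ℝ) : ℂ) at hgz
  refine ⟨_, fun u => ?_, (hw z).trans hgz⟩
  rw [hw]
  exact (g.le_opNorm u).trans_eq (by rw [hg, one_mul]; rfl)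

theorem gind_vecMulVec_le {x w : Fin n → ℂ} (hw : ∀ u, ‖w ⬝ᵥ u‖ ≤ ν u) :
    gind ν ν (vecMulVec x w) ≤ ν x := by
  refine gind_le_of_mulVec_le (hν.out.nonneg x) fun u => ?_
  rw [vecMulVec_mulVec, op_smul_eq_smul, hν.out.2.1 (w ⬝ᵥ u), mul_comm (ν x)]
  exact mul_le_mul_of_nonneg_right (hw u) (hν.out.nonneg x)

theorem mulVec_le_of_le_gind {N : Matrix (Fin n) (Fin n) ℂ → ℝ} (hN : IsNormMn N)
    (hmul : ∀ A B, N (A * B) ≤ N A * N B) (hle : ∀ A, N A ≤ gind ν ν A)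
    (A : Matrix (Fin n) (Fin n) ℂ) (x : Fin n → ℂ) : ν (A *ᵥ x) ≤ N A * ν x := by
  by_cases hAx : A *ᵥ x = 0
  · rw [hAx, hν.out.map_zero]
    exact mul_nonneg (hN.nonneg A) (hν.out.nonneg x)
  obtain ⟨w, hw, hwAx⟩ := exists_dual_dotProduct (ν := ν) (A *ᵥ x)
  set W := vecMulVec x w
  have hWAW : W * (A * W) = (ν (A *ᵥ x) : ℂ) • W := by
    rw [mul_vecMulVec, vecMulVec_mul_vecMulVec, hwAx, vecMulVec_smul]
  have hW : 0 < N W := by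
    refine hN.pos (vecMulVec_ne_zero ?_ ?_)
    · rintro rfl
      exact hAx (mulVec_zero A)
    · rintro rfl
      exact hAx ((hν.out.1 _).1 (by simpa using hwAx.symm))
  have hNW : N W ≤ ν x := (hle W).trans (gind_vecMulVec_le hw)
  suffices ν (A *ᵥ x) * N W ≤ N A * ν x * N W from le_of_mul_le_mul_right this hW
  calc ν (A *ᵥ x) * N W = N (W * (A * W)) := by
        rw [hWAW, hN.2.1, Complex.norm_real, Real.norm_of_nonneg (hν.out.nonneg _)]
    _ ≤ N W * (N A * N W) := (hmul _ _).trans (by gcongr; exact hmul A W)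
    _ ≤ ν x * (N A * N W) := by gcongr; exact mul_nonneg (hN.nonneg A) hW.le
    _ = N A * ν x * N W := by ring

theorem gind_le_of_le_gind {N : Matrix (Fin n) (Fin n) ℂ → ℝ} (hN : IsNormMn N)
    (hmul : ∀ A B, N (A * B) ≤ N A * N B) (hle : ∀ A, N A ≤ gind ν ν A)
    (A : Matrix (Fin n) (Fin n) ℂ) : gind ν ν A ≤ N A :=
  gind_le_of_mulVec_le (hN.nonneg A) (mulVec_le_of_le_gind hN hmul hle A)

end InducedNorm

section Cmat

variable {n : ℕ}

theorem Cmat_injective : Function.Injective (Cmat (n := n)) :=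
  fun _ _ h => funext fun i => congrFun (congrFun h i) i

theorem mul_Cmat (A : Matrix (Fin n) (Fin n) ℂ) (x : Fin n → ℂ) :
    A * Cmat x = Cmat (A *ᵥ x) := rfl

theorem IsNormMn.isNormCn_comp_Cmat {N : Matrix (Fin n) (Fin n) ℂ → ℝ} (hN : IsNormMn N) :
    IsNormCn fun x => N (Cmat x) :=
  ⟨fun _ => (hN.1 _).trans (Cmat_injective.eq_iff' rfl), fun c x => hN.2.1 c (Cmat x),
    fun x y => hN.2.2 (Cmat x) (Cmat y)⟩

end Cmat

theorem algebra_norm_induced_iff_minimal_general (n : ℕ)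
    (N : Matrix (Fin n) (Fin n) ℂ → ℝ) (hN : IsNormMn N)
    (halg : ∀ A B : Matrix (Fin n) (Fin n) ℂ, N (A * B) ≤ N A * N B) :
    (∃ ν₀ : (Fin n → ℂ) → ℝ, IsNormCn ν₀ ∧
        ∀ A : Matrix (Fin n) (Fin n) ℂ, N A = gind ν₀ ν₀ A) ↔
      (∀ N' : Matrix (Fin n) (Fin n) ℂ → ℝ, IsNormMn N' →
        (∀ A B, N' (A * B) ≤ N' A * N' B) →
        (∀ A, N' A ≤ N A) → ∀ A, N' A = N A) := by
  constructor
  · rintro ⟨ν, hν, hNν⟩ N' hN' hN'mul hN'le A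
    have : Fact (IsNormCn ν) := ⟨hν⟩
    have hle : ∀ B, N' B ≤ gind ν ν B := fun B => (hN'le B).trans_eq (hNν B)
    exact le_antisymm (hN'le A) ((hNν A).trans_le (gind_le_of_le_gind hN' hN'mul hle A))
  · intro hmin
    let ν : (Fin n → ℂ) → ℝ := fun x => N (Cmat x)
    have : Fact (IsNormCn ν) := ⟨hN.isNormCn_comp_Cmat⟩
    have hle : ∀ A, gind ν ν A ≤ N A := fun A =>
      gind_le_of_mulVec_le (hN.nonneg A) fun x => by
        simpa only [mul_Cmat] using halg A (Cmat x)
    exact ⟨ν, Fact.out, fun A => (hmin _ isNormMn_gind gind_mul_le hle A).symm⟩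

theorem algebra_norm_induced_iff_minimal (n : ℕ) (hn : 1 ≤ n)
    (N : Matrix (Fin n) (Fin n) ℂ → ℝ) (hN : IsNormMn N)
    (halg : ∀ A B : Matrix (Fin n) (Fin n) ℂ, N (A * B) ≤ N A * N B) :
    (∃ ν₀ : (Fin n → ℂ) → ℝ, IsNormCn ν₀ ∧
        ∀ A : Matrix (Fin n) (Fin n) ℂ, N A = gind ν₀ ν₀ A) ↔
      (∀ N' : Matrix (Fin n) (Fin n) ℂ → ℝ, IsNormMn N' →
        (∀ A B, N' (A * B) ≤ N' A * N' B) →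
        (∀ A, N' A ≤ N A) → ∀ A, N' A = N A) :=
  algebra_norm_induced_iff_minimal_general n N hN halg
end
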